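/- arXiv:math/0407188 — 2 statements merged into one kernel-verified Lean document; each statement's English description precedes it below -/
import Mathlib

section
/- The system of difference equations −Δ³W_m = 8·W4(m) for 0 ≤ m ≤ 4, where W4(m) = −(4/3)m(m−1)(m−2) + 16m(m−1) − 96m + 240 and Δ³W_m = W_{m+3} − 3W_{m+2} + 3W_{m+1} − W_m, with initial conditions W_0 = 18264, W_1 − W_0 = −9168, and W_2 − 2W_1 + W_0 = 4344, has the unique solution (W_0,...,W_7) = (18264, 9096, 4272, 1872, 744, 248, 64, 64). -/
/-- The difference equations `−Δ³W_m = 8·W₄(m)` for `0 ≤ m ≤ 4`, where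
`W₄(m) = −(4/3)m(m−1)(m−2) + 16m(m−1) − 96m + 240`, with initial conditions
`W_0 = 18264`, `W_1 − W_0 = −9168`, `W_2 − 2W_1 + W_0 = 4344`, have the unique
solution `(18264, 9096, 4272, 1872, 744, 248, 64, 64)`. -/
theorem stmt13 (W : ℕ → ℚ) (W4 : ℚ → ℚ)
    (hW4 : ∀ m : ℚ, W4 m = -(4/3) * m * (m - 1) * (m - 2) + 16 * m * (m - 1) - 96 * m + 240)
    (hrec : ∀ m : ℕ, m ≤ 4 →
      -(W (m + 3) - 3 * W (m + 2) + 3 * W (m + 1) - W m) = 8 * W4 (m : ℚ))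
    (h0 : W 0 = 18264) (h1 : W 1 - W 0 = -9168) (h2 : W 2 - 2 * W 1 + W 0 = 4344) :
    W 0 = 18264 ∧ W 1 = 9096 ∧ W 2 = 4272 ∧ W 3 = 1872 ∧ W 4 = 744
      ∧ W 5 = 248 ∧ W 6 = 64 ∧ W 7 = 64 := by
  have r0 := hrec 0 (by norm_num)
  have r1 := hrec 1 (by norm_num)
  have r2 := hrec 2 (by norm_num)
  have r3 := hrec 3 (by norm_num)
  have r4 := hrec 4 (by norm_num)
  simp only [hW4] at r0 r1 r2 r3 r4
  norm_num at r0 r1 r2 r3 r4 ⊢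
  refine ⟨h0, ?_, ?_, ?_, ?_, ?_, ?_, ?_⟩ <;> linarith
end

section
/- If sequences satisfy W_n ≥ M_n where M_n ≥ ∏_{i} (y_i!·(y_i+1)!/2^{y_i}) · ∏_i y_i! with y_{i+1} ≥ n/2^{i+1} − 1 for 0 ≤ i ≤ ⌊log₂ n⌋ − 1, then log W_n ≥ 3n·log n + O(n). -/
/-!
Each strip contributes `log (y! (y+1)! y! / 2^y) ≥ 3 log y! - y log 2`, and `y! ≥ a^y / e^a`
(one term of the exponential series) with `a = 2t`, `t = n / 2^i ≤ y + 1`, turns this into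
`3 t log t - O(t)`. Summing over the dyadic scales `t = n/2, n/4, …, n/2^⌊log₂ n⌋`, the main terms
give `3 n log n` up to `O(n)`, because `∑ n/2^i = n - O(1)` and `∑ i n/2^i ≤ 2n`.
-/

open Finset Real
open scoped Nat

lemma mul_log_sub_le_log_factorial (y : ℕ) {a : ℝ} (ha : 0 < a) : y * log a - a ≤ log (y ! : ℝ) := by
  have hexp : a ^ y / y ! ≤ exp a := Real.pow_div_factorial_le_exp a ha.le y
  rw [← log_le_log_iff (by positivity) (exp_pos a), log_exp, log_div (by positivity) (by positivity),
    log_pow] at hexp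
  linarith

lemma three_mul_log_sub_le_log_factorial_prod {y : ℕ} {t : ℝ} (ht : 1 ≤ t) (hy : t - 1 ≤ y) :
    3 * t * log t - 9 * t ≤ log ((y ! : ℝ) * (y + 1)! / 2 ^ y * y !) := by
  have hy! : (0 : ℝ) < y ! := by positivity
  have hlog_prod : log ((y ! : ℝ) * (y + 1)! / 2 ^ y * y !)
      = 2 * log (y ! : ℝ) + log ((y + 1)! : ℝ) - y * log 2 := by
    rw [log_mul (by positivity) hy!.ne', log_div (by positivity) (by positivity),
      log_mul hy!.ne' (by positivity), log_pow]
    ring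
  have hmono : log (y ! : ℝ) ≤ log ((y + 1)! : ℝ) :=
    log_le_log hy! (by exact_mod_cast Nat.factorial_le y.le_succ)
  have hfac := mul_log_sub_le_log_factorial y (a := 2 * t) (by positivity)
  rw [log_mul two_ne_zero (by positivity)] at hfac
  have hlogt : 0 ≤ log t := log_nonneg ht
  have hlogt_le : log t ≤ t := log_le_self (by positivity)
  have hlog2 : 0 ≤ log 2 := log_nonneg one_le_two
  have hy0 : (0 : ℝ) ≤ y := y.cast_nonneg
  have : (t - 1) * log t ≤ y * log t := mul_le_mul_of_nonneg_right hy hlogt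
  nlinarith

lemma sum_Icc_div_two_pow (x : ℝ) (L : ℕ) : ∑ i ∈ Icc 1 L, x / 2 ^ i = x - x / 2 ^ L := by
  induction L with
  | zero => simp
  | succ L ih =>
    rw [sum_Icc_succ_top (by omega), ih]
    field_simp
    ring

lemma sum_Icc_mul_div_two_pow (x : ℝ) (L : ℕ) :
    ∑ i ∈ Icc 1 L, i * x / 2 ^ i = 2 * x - (L + 2) * x / 2 ^ L := by
  induction L with
  | zero => simp
  | succ L ih =>
    rw [sum_Icc_succ_top (by omega), ih]
    push_cast
    field_simp
    ring

lemma three_mul_log_sub_le_sum_dyadic {n : ℕ} (hn : 1 ≤ n) :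
    3 * (n : ℝ) * log n - 21 * n ≤
      ∑ i ∈ Icc 1 (Nat.log 2 n), (3 * ((n : ℝ) / 2 ^ i) * log (n / 2 ^ i) - 9 * (n / 2 ^ i)) := by
  set L := Nat.log 2 n
  have hterm : ∀ i ∈ Icc 1 L, 3 * ((n : ℝ) / 2 ^ i) * log (n / 2 ^ i) - 9 * (n / 2 ^ i)
      = (3 * log n - 9) * (n / 2 ^ i) - 3 * log 2 * (i * n / 2 ^ i) := by
    intro i _
    rw [log_div (by positivity) (by positivity), log_pow]
    ring
  rw [sum_congr rfl hterm, sum_sub_distrib, ← mul_sum, ← mul_sum, sum_Icc_div_two_pow,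
    sum_Icc_mul_div_two_pow]
  have hn0 : (1 : ℝ) ≤ n := by exact_mod_cast hn
  have htail : (n : ℝ) / 2 ^ L ≤ 2 := by
    have : n < 2 ^ (L + 1) := Nat.lt_pow_succ_log_self one_lt_two n
    rw [div_le_iff₀ (by positivity)]
    exact_mod_cast (by omega : n ≤ 2 * 2 ^ L)
  have htail0 : 0 ≤ (n : ℝ) / 2 ^ L := by positivity
  have hLtail : 0 ≤ (L + 2) * (n : ℝ) / 2 ^ L := by positivity
  have hlogn : 0 ≤ log n := log_nonneg hn0
  have hlogn_le : log n ≤ n := log_le_self (by positivity)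
  have hlog2 : log 2 < 1 := by linarith [log_two_lt_d9]
  have hlog2' : 0 ≤ log 2 := log_nonneg one_le_two
  nlinarith [mul_le_mul_of_nonneg_left htail hlogn]

/-- If `W_n ≥ M_n` with
`M_n ≥ ∏_i (y_i!·(y_i+1)!/2^{y_i}) · ∏_i y_i!` and
`y_{i+1} ≥ n/2^{i+1} − 1` for `0 ≤ i ≤ ⌊log₂ n⌋ − 1`, then
`log W_n ≥ 3n·log n + O(n)`. -/
theorem stmt18 (W M : ℕ → ℝ) (y : ℕ → ℕ → ℕ)
    (hWM : ∀ n, W n ≥ M n)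
    (hM : ∀ n : ℕ, M n ≥
      (∏ i ∈ Finset.Icc 1 (Nat.log 2 n),
        ((Nat.factorial (y n i) : ℝ) * (Nat.factorial (y n i + 1) : ℝ) / 2 ^ (y n i)))
      * ∏ i ∈ Finset.Icc 1 (Nat.log 2 n), (Nat.factorial (y n i) : ℝ))
    (hy : ∀ n : ℕ, ∀ i : ℕ, i ≤ Nat.log 2 n - 1 →
      (y n (i + 1) : ℝ) ≥ (n : ℝ) / 2 ^ (i + 1) - 1) :
    ∃ C : ℝ, ∀ n : ℕ, 2 ≤ n →
      Real.log (W n) ≥ 3 * (n : ℝ) * Real.log n - C * n := by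
  refine ⟨21, fun n hn => ?_⟩
  have hterm : ∀ i ∈ Icc 1 (Nat.log 2 n),
      3 * ((n : ℝ) / 2 ^ i) * log (n / 2 ^ i) - 9 * (n / 2 ^ i) ≤
        log ((y n i)! * (y n i + 1)! / 2 ^ (y n i) * (y n i)!) := by
    intro i hi
    obtain ⟨hi1, hiL⟩ := mem_Icc.mp hi
    have h2i : 2 ^ i ≤ n :=
      (Nat.pow_le_pow_right two_pos hiL).trans (Nat.pow_log_le_self 2 (by omega))
    refine three_mul_log_sub_le_log_factorial_prod ?_ ?_
    · rw [one_le_div₀ (by positivity)]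
      exact_mod_cast h2i
    · have := hy n (i - 1) (by omega)
      rw [Nat.sub_add_cancel hi1] at this
      linarith
  have hpos : ∀ i ∈ Icc 1 (Nat.log 2 n),
      ((y n i)! * (y n i + 1)! / 2 ^ (y n i) * (y n i)! : ℝ) ≠ 0 := fun i _ => by positivity
  calc 3 * (n : ℝ) * log n - 21 * n
      ≤ ∑ i ∈ Icc 1 (Nat.log 2 n), (3 * ((n : ℝ) / 2 ^ i) * log (n / 2 ^ i) - 9 * (n / 2 ^ i)) :=
        three_mul_log_sub_le_sum_dyadic (by omega)
    _ ≤ ∑ i ∈ Icc 1 (Nat.log 2 n), log ((y n i)! * (y n i + 1)! / 2 ^ (y n i) * (y n i)!) :=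
        sum_le_sum hterm
    _ = log ((∏ i ∈ Icc 1 (Nat.log 2 n), ((y n i)! * (y n i + 1)! / 2 ^ (y n i) : ℝ)) *
          ∏ i ∈ Icc 1 (Nat.log 2 n), ((y n i)! : ℝ)) := by
        rw [← log_prod hpos, prod_mul_distrib]
    _ ≤ log (W n) := log_le_log (by positivity) ((hM n).trans (hWM n))
end
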